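/- For the algebra U of affiliated operators of a finite von Neumann algebra, the torsion theory (T, P) of zero-dimensional modules coincides with the Lambek torsion theory, the Goldie torsion theory, and the torsion theory (bnd, unb) cogenerated by U: a U-module M satisfies dim_U(M) = 0 if and only if Hom_U(M, U) restricted to every submodule vanishes (i.e., M is singular, equivalently Hom_U(M, E(U)) = 0). -/

import Mathlib

/-!
If `dim_U M = 0` and `f : N → U` is nonzero on some `n`, write `u = f n` and choose `x` with
`u x u = u`. Then `e = x u` is a nonzero idempotent, so `U e ⊆ U u ⊆ f(N)` is a nonzero finitely
generated projective module; but it is a submodule of a quotient of a submodule of `M`, so it has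
dimension zero, contradicting faithfulness.

Conversely, a projective module on which every functional vanishes is zero, so if all
`Hom_U(N, U)` vanish then `M` has no nonzero finitely generated projective submodule, and
`dim_U M`, the supremum of their dimensions, is zero.
-/

open scoped ENNReal

/-- An abstraction of the pair `A ⊆ U = U(A)`, where `A` is a finite von Neumann algebra
(with a fixed normal faithful trace) and `U` is its algebra of affiliated operators,
together with the trace-induced dimension functions on `A`- and on `U`-modules.
The fields record the facts used in the paper: `U` is the classical ring of quotients
of `A`, `U` is von Neumann regular and self-injective, and the dimensions are
isomorphism-invariant, additive on short exact sequences, continuous with respect to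
suprema over finitely generated projective submodules, and faithful on finitely
generated projective modules. -/
structure AffiliatedOperatorsSetup (A U : Type) [Ring A] [Ring U] where
  /-- the inclusion of `A` into `U` -/
  incl : A →+* U
  incl_injective : Function.Injective incl
  /-- `U` is von Neumann regular -/
  regular : ∀ u : U, ∃ x : U, u * x * u = u
  /-- `U` is self-injective -/
  selfInjective : Module.Injective U U
  /-- every element of `U` is a left fraction `s⁻¹ a` with `a, s ∈ A`, `s` regular:
  `U = Q_cl(A)` -/
  fraction : ∀ u : U, ∃ a s : A,
      (∀ b : A, s * b = 0 → b = 0) ∧ (∀ b : A, b * s = 0 → b = 0) ∧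
      incl s * u = incl a
  /-- regular elements of `A` become invertible in `U` -/
  regularUnit : ∀ s : A, (∀ b : A, s * b = 0 → b = 0) → (∀ b : A, b * s = 0 → b = 0) →
      IsUnit (incl s)
  /-- the trace-induced dimension of an `A`-module -/
  dimA : ∀ (M : Type) [AddCommGroup M] [Module A M], ℝ≥0∞
  /-- the trace-induced dimension of a `U`-module -/
  dimU : ∀ (M : Type) [AddCommGroup M] [Module U M], ℝ≥0∞
  dimA_congr : ∀ (M N : Type) [AddCommGroup M] [Module A M] [AddCommGroup N] [Module A N],
      (M ≃ₗ[A] N) → dimA M = dimA N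
  dimU_congr : ∀ (M N : Type) [AddCommGroup M] [Module U M] [AddCommGroup N] [Module U N],
      (M ≃ₗ[U] N) → dimU M = dimU N
  dimA_add : ∀ (M : Type) [AddCommGroup M] [Module A M] (N : Submodule A M),
      dimA M = dimA ↥N + dimA (M ⧸ N)
  dimU_add : ∀ (M : Type) [AddCommGroup M] [Module U M] (N : Submodule U M),
      dimU M = dimU ↥N + dimU (M ⧸ N)
  dimA_sup : ∀ (M : Type) [AddCommGroup M] [Module A M],
      dimA M = ⨆ (N : Submodule A M) (_ : N.FG ∧ Module.Projective A ↥N), dimA ↥N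
  dimU_sup : ∀ (M : Type) [AddCommGroup M] [Module U M],
      dimU M = ⨆ (N : Submodule U M) (_ : N.FG ∧ Module.Projective U ↥N), dimU ↥N
  dimA_faithful : ∀ (M : Type) [AddCommGroup M] [Module A M],
      Module.Finite A M → Module.Projective A M → (dimA M = 0 ↔ Subsingleton M)
  dimU_faithful : ∀ (M : Type) [AddCommGroup M] [Module U M],
      Module.Finite U M → Module.Projective U M → (dimU M = 0 ↔ Subsingleton M)

theorem Submodule.projective_span_singleton_of_isIdempotentElem {R : Type*} [Ring R] {e : R}
    (he : IsIdempotentElem e) : Module.Projective R (R ∙ e) := by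
  refine .of_split (R ∙ e).subtype
    ((LinearMap.toSpanSingleton R R e).codRestrict _ fun r ↦ Submodule.smul_mem _ r
      (Submodule.mem_span_singleton_self e)) ?_
  ext ⟨v, hv⟩
  obtain ⟨r, rfl⟩ := Submodule.mem_span_singleton.mp hv
  change r * e * e = r * e
  rw [mul_assoc, he.eq]

namespace AffiliatedOperatorsSetup

variable {A U : Type} [Ring A] [Ring U] (S : AffiliatedOperatorsSetup A U)
  {M N : Type} [AddCommGroup M] [Module U M] [AddCommGroup N] [Module U N]

theorem dimU_le_of_injective (f : M →ₗ[U] N) (hf : Function.Injective f) :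
    S.dimU M ≤ S.dimU N := by
  rw [S.dimU_congr _ _ (LinearEquiv.ofInjective f hf), S.dimU_add N (LinearMap.range f)]
  exact le_self_add

theorem dimU_le_of_surjective (f : M →ₗ[U] N) (hf : Function.Surjective f) :
    S.dimU N ≤ S.dimU M := by
  rw [S.dimU_add M (LinearMap.ker f), S.dimU_congr _ _ (f.quotKerEquivOfSurjective hf)]
  exact le_add_self

theorem dimU_mono {P Q : Submodule U M} (h : P ≤ Q) : S.dimU P ≤ S.dimU Q :=
  S.dimU_le_of_injective _ (Submodule.inclusion_injective h)

theorem eq_zero_of_isIdempotentElem_of_dimU_eq_zero {e : U} (he : IsIdempotentElem e)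
    (h : S.dimU (U ∙ e) = 0) : e = 0 := by
  have := Submodule.projective_span_singleton_of_isIdempotentElem he
  rw [← Submodule.span_singleton_eq_bot (R := U), ← Submodule.subsingleton_iff_eq_bot]
  exact (S.dimU_faithful _ inferInstance this).mp h

theorem dimU_span_singleton_ne_zero {u : U} (hu : u ≠ 0) : S.dimU (U ∙ u) ≠ 0 := by
  obtain ⟨x, hx⟩ := S.regular u
  have he : IsIdempotentElem (x * u) := by
    rw [IsIdempotentElem, mul_assoc, ← mul_assoc u, hx]
  intro h0
  have he0 : x * u = 0 := S.eq_zero_of_isIdempotentElem_of_dimU_eq_zero he <|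
    nonpos_iff_eq_zero.mp <| h0 ▸ S.dimU_mono ((Submodule.span_singleton_le_iff_mem _ _).mpr
      (Submodule.mem_span_singleton.mpr ⟨x, rfl⟩))
  exact hu (by simpa [mul_assoc, he0] using hx.symm)

theorem dimU_eq_zero_of_forall_fg_projective
    (h : ∀ P : Submodule U M, P.FG → Module.Projective U P → Subsingleton P) :
    S.dimU M = 0 := by
  refine nonpos_iff_eq_zero.mp ((S.dimU_sup M).trans_le (iSup₂_le fun P ⟨hfg, hproj⟩ ↦ ?_))
  have := Module.Finite.iff_fg.mpr hfg
  exact ((S.dimU_faithful P ‹_› hproj).mpr (h P hfg hproj)).le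

end AffiliatedOperatorsSetup

/-- for the algebra `U` of affiliated operators of a finite von Neumann
algebra, the torsion theory `(T, P)` of zero-dimensional modules coincides with the
Lambek torsion theory, the Goldie torsion theory and the torsion theory `(bnd, unb)`
cogenerated by `U`: a `U`-module `M` satisfies `dim_U(M) = 0` if and only if
`Hom_U(N, U) = 0` for every submodule `N` of `M` (i.e. `M` is singular, equivalently
`Hom_U(M, E(U)) = 0`, since `E(U) = U`). -/
theorem dim_zero_iff_every_submodule_bounded (A U : Type) [Ring A] [Ring U]
    (S : AffiliatedOperatorsSetup A U)
    (M : Type) [AddCommGroup M] [Module U M] :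
    S.dimU M = 0 ↔ ∀ (N : Submodule U M) (f : ↥N →ₗ[U] U), f = 0 := by
  constructor
  · intro hdim N f
    refine LinearMap.ext fun n ↦ by_contra fun hn ↦ S.dimU_span_singleton_ne_zero hn ?_
    refine nonpos_iff_eq_zero.mp ?_
    calc S.dimU (U ∙ f n) ≤ S.dimU (LinearMap.range f) :=
          S.dimU_mono ((Submodule.span_singleton_le_iff_mem _ _).mpr (f.mem_range_self n))
      _ ≤ S.dimU N := S.dimU_le_of_surjective _ f.surjective_rangeRestrict
      _ ≤ S.dimU M := S.dimU_le_of_injective _ N.injective_subtype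
      _ = 0 := hdim
  · intro hbounded
    refine S.dimU_eq_zero_of_forall_fg_projective fun P _ _ ↦
      subsingleton_of_forall_eq 0 fun c ↦ ?_
    exact (Module.forall_dual_apply_eq_zero_iff U c).mp fun φ ↦
      LinearMap.congr_fun (hbounded P φ) c
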